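/- Let θ ≥ 2 and n ≥ 2 be integers and β > 0. Then tr(exp(−(β/n)·H_n)) = ∑_{σ ∈ S_n} f_n(σ)·θ^{c(σ)}. -/

import Mathlib

open Filter Topology

/-- The transposition operator `T_{xy}`: the permutation matrix of the bijection
`a ↦ a ∘ (x y)` on functions `a : {1,…,n} → {1,…,θ}`. -/
def transpositionMatrix (θ n : ℕ) (x y : Fin n) :
    Matrix (Fin n → Fin θ) (Fin n → Fin θ) ℂ :=
  Matrix.of fun a b => if a ∘ (Equiv.swap x y) = b then 1 else 0

/-- The Hamiltonian `H_n = -∑_{x<y} (T_{xy} - I)`. -/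
noncomputable def hamiltonian (θ n : ℕ) : Matrix (Fin n → Fin θ) (Fin n → Fin θ) ℂ :=
  - ∑ p ∈ Finset.univ.filter (fun p : Fin n × Fin n => p.1 < p.2),
      (transpositionMatrix θ n p.1 p.2 - 1)

/-- `N_k(σ)`: the number of `k`-tuples `(τ_1, …, τ_k)` of transpositions in `S_n`
with `τ_k ∘ ⋯ ∘ τ_1 = σ`. -/
noncomputable def Ntrans (n k : ℕ) (σ : Equiv.Perm (Fin n)) : ℕ := by
  classical exact (Finset.univ.filter (fun τ : Fin k → Equiv.Perm (Fin n) =>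
    (∀ i, (τ i).IsSwap) ∧ (List.ofFn τ).reverse.prod = σ)).card

/-- The probability distribution `f_n` on `S_n`:
`f_n(σ) = e^{−t_n} ∑_{k≥0} (t_n^k/k!)·N_k(σ)/C(n,2)^k` with `t_n = β(n−1)/2`. -/
noncomputable def fdist (β : ℝ) (n : ℕ) (σ : Equiv.Perm (Fin n)) : ℝ :=
  Real.exp (-(β * ((n : ℝ) - 1) / 2)) *
    ∑' k : ℕ, (β * ((n : ℝ) - 1) / 2) ^ k / (Nat.factorial k : ℝ) *
      (Ntrans n k σ : ℝ) / ((n.choose 2 : ℝ)) ^ k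

/-- `c(σ)`: the number of cycles of `σ` (orbits on `{1,…,n}`, including fixed points). -/
def cycleCount (n : ℕ) (σ : Equiv.Perm (Fin n)) : ℕ :=
  σ.cycleType.card + (n - σ.support.card)

/-!
Write `M = ∑_{x<y} T_{xy}`. Since `(β/n)·C(n,2) = t_n`, the exponent is `(β/n) M - t_n I`, so the
trace equals `e^{-t_n} ∑_k (β/n)^k/k! · tr(M^k)`. Each `T_{xy}` is the image of a transposition
under the representation `σ ↦ P_σ` of `S_n` by the permutation matrices of `a ↦ a ∘ σ`; expanding
`M^k` gives `tr(M^k) = ∑_σ N_k(σ) tr(P_σ)`, and `tr(P_σ)` counts the colourings `a` constant on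
the cycles of `σ`, which is `θ^{c(σ)}`. Finally `(β/n)^k = t_n^k / C(n,2)^k`, and the finite sum
over `σ` commutes with the series in `k`.
-/

open Equiv Finset Matrix

namespace Equiv.Perm

variable {α : Type*}

section Cycles

variable [Fintype α] [DecidableEq α]

def cycleOrFixedPoint (σ : Perm α) (x : α) : σ.cycleFactorsFinset ⊕ Function.fixedPoints σ :=
  if hx : x ∈ σ.support then .inl ⟨σ.cycleOf x, cycleOf_mem_cycleFactorsFinset_iff.2 hx⟩
  else .inr ⟨x, notMem_support.1 hx⟩

theorem cycleOrFixedPoint_eq_iff (σ : Perm α) (x y : α) :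
    σ.cycleOrFixedPoint x = σ.cycleOrFixedPoint y ↔ σ.SameCycle x y := by
  by_cases hx : x ∈ σ.support <;> by_cases hy : y ∈ σ.support <;>
    simp only [cycleOrFixedPoint, hx, hy, dite_true, dite_false, reduceCtorEq, false_iff,
      Sum.inl.injEq, Sum.inr.injEq, Subtype.mk.injEq]
  · exact (sameCycle_iff_cycleOf_eq_of_mem_support hx hy).symm
  · exact fun h => hy (h.mem_support_iff.1 hx)
  · exact fun h => hx (h.mem_support_iff.2 hy)
  · rw [Subtype.ext_iff]
    exact ⟨fun h => (show x = y from h) ▸ SameCycle.refl σ x,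
      fun h => h.eq_of_left (notMem_support.1 hx)⟩

theorem cycleOrFixedPoint_surjective (σ : Perm α) : Function.Surjective σ.cycleOrFixedPoint := by
  rintro (⟨c, hc⟩ | ⟨x, hx⟩)
  · obtain ⟨x, hx⟩ := (mem_cycleFactorsFinset_iff.1 hc).1.nonempty_support
    have hxσ : x ∈ σ.support := mem_cycleFactorsFinset_support_le hc hx
    refine ⟨x, ?_⟩
    simp only [cycleOrFixedPoint, hxσ, dite_true, Sum.inl.injEq, Subtype.mk.injEq]
    exact (cycle_is_cycleOf hx hc).symm
  · have hxσ : x ∉ σ.support := notMem_support.2 hx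
    exact ⟨x, by simp only [cycleOrFixedPoint, hxσ, dite_false]⟩

theorem nat_card_quotient_sameCycle (σ : Perm α) :
    Nat.card (Quotient (SameCycle.setoid σ))
      = σ.cycleType.card + (Fintype.card α - #σ.support) := by
  have hker : SameCycle.setoid σ = Setoid.ker σ.cycleOrFixedPoint :=
    Setoid.ext fun x y => (σ.cycleOrFixedPoint_eq_iff x y).symm
  rw [hker, Nat.card_congr (Setoid.quotientKerEquivOfSurjective _ σ.cycleOrFixedPoint_surjective),
    Nat.card_sum, Nat.card_eq_fintype_card, Nat.card_eq_fintype_card, card_fixedPoints,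
    sum_cycleType, cycleType_def, Multiset.card_map, Fintype.card_coe]
  rfl

end Cycles

theorem comp_eq_self_iff_sameCycle_le_ker [Finite α] {κ : Type*} (σ : Perm α) (a : α → κ) :
    a ∘ σ = a ↔ SameCycle.setoid σ ≤ Setoid.ker a := by
  refine ⟨fun h x y hxy => ?_,
    fun h => funext fun x => h (sameCycle_apply_left.2 (SameCycle.refl σ x))⟩
  obtain ⟨k, -, rfl⟩ := hxy.exists_pow_eq'
  clear hxy
  show a x = a ((σ ^ k) x)
  induction k with
  | zero => rfl
  | succ k ih => rw [ih, pow_succ', mul_apply]; exact (congrFun h _).symm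

theorem nat_card_comp_eq_self [Fintype α] [DecidableEq α] (κ : Type*) (σ : Perm α) :
    Nat.card {a : α → κ // a ∘ σ = a}
      = Nat.card κ ^ (σ.cycleType.card + (Fintype.card α - #σ.support)) := by
  rw [Nat.card_congr ((Equiv.subtypeEquivRight (comp_eq_self_iff_sameCycle_le_ker σ)).trans
    (Setoid.liftEquiv _)), Nat.card_fun, nat_card_quotient_sameCycle]

def precomp (κ : Type*) (σ : Perm α) : Perm (α → κ) := σ.symm.arrowCongr (Equiv.refl κ)

@[simp]
theorem precomp_apply {κ : Type*} (σ : Perm α) (a : α → κ) : σ.precomp κ a = a ∘ σ :=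
  rfl

theorem precomp_mul {κ : Type*} (σ τ : Perm α) :
    (σ * τ).precomp κ = τ.precomp κ * σ.precomp κ :=
  rfl

section Transpositions

variable [Fintype α]

open scoped Classical in
noncomputable def transpositions (α : Type*) [Fintype α] [DecidableEq α] : Finset (Perm α) :=
  {τ | τ.IsSwap}

theorem mem_transpositions [DecidableEq α] {τ : Perm α} :
    τ ∈ transpositions α ↔ τ.IsSwap := by
  simp [transpositions]

theorem card_transpositions [DecidableEq α] (h : 2 ≤ Fintype.card α) :
    #(transpositions α) = (Fintype.card α).choose 2 := by
  have : transpositions α = ({τ : Perm α | τ.cycleType = {2}} : Finset _) := by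
    ext τ
    simp [mem_transpositions, isSwap_iff_cycleType]
  rw [this, card_of_cycleType_singleton le_rfl h]
  simp

theorem sum_swap_of_lt [LinearOrder α] {M : Type*} [AddCommMonoid M] (F : Perm α → M) :
    ∑ p ∈ univ.filter (fun p : α × α => p.1 < p.2), F (swap p.1 p.2)
      = ∑ τ ∈ transpositions α, F τ := by
  refine Finset.sum_nbij (fun p => swap p.1 p.2) ?_ ?_ ?_ (fun _ _ => rfl)
  · intro p hp
    simp only [mem_filter, mem_univ, true_and] at hp
    exact mem_transpositions.2 ⟨p.1, p.2, hp.ne, rfl⟩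
  · rintro ⟨x, y⟩ hxy ⟨x', y'⟩ hxy' h
    simp only [coe_filter, mem_univ, true_and, Set.mem_ofPred_eq] at hxy hxy'
    have hsupp := congrArg (fun τ : Perm α => (τ.support : Set α)) h
    simp only [support_swap hxy.ne, support_swap hxy'.ne, coe_insert, coe_singleton,
      Set.pair_eq_pair_iff] at hsupp
    rcases hsupp with ⟨rfl, rfl⟩ | ⟨rfl, rfl⟩
    · rfl
    · exact absurd (hxy.trans hxy') (lt_irrefl x)
  · intro τ hτ
    obtain ⟨x, y, hne, rfl⟩ := mem_transpositions.1 hτ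
    rcases hne.lt_or_gt with h | h
    · exact ⟨(x, y), by simpa using h, rfl⟩
    · exact ⟨(y, x), by simpa using h, swap_comm y x⟩

end Transpositions

end Equiv.Perm

theorem Finset.sum_pow_eq_sum_piFinset_reverse_prod {ι R : Type*} [DecidableEq ι] [Semiring R]
    (s : Finset ι) (f : ι → R) (k : ℕ) :
    (∑ i ∈ s, f i) ^ k
      = ∑ g ∈ Fintype.piFinset fun _ : Fin k => s, ((List.ofFn g).reverse.map f).prod := by
  induction k with
  | zero => simp
  | succ k ih =>
    rw [pow_succ, ih, Finset.sum_mul_sum, ← Finset.sum_product']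
    refine Finset.sum_nbij' (fun p => Fin.cons p.2 p.1) (fun g => (Fin.tail g, g 0))
      ?_ ?_ (fun _ _ => rfl) (fun g _ => Fin.cons_self_tail g) ?_
    · rintro ⟨g, i⟩ h
      simp_all [Fin.forall_fin_succ]
    · intro g hg
      simp_all [Fin.tail]
    · rintro ⟨g, i⟩ -
      simp [List.ofFn_succ]

section ColourMatrix

variable {α κ R : Type*} [DecidableEq α] [DecidableEq κ] [Fintype α] [Fintype κ] [Semiring R]

def colourMatrix (κ R : Type*) [DecidableEq κ] [Fintype κ] [Semiring R] :
    Perm α →* Matrix (α → κ) (α → κ) R where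
  toFun σ := (σ.precomp κ).permMatrix R
  map_one' := permMatrix_one
  map_mul' σ τ := by rw [Perm.precomp_mul, permMatrix_mul]

theorem colourMatrix_apply (σ : Perm α) (a b : α → κ) :
    colourMatrix κ R σ a b = if a ∘ σ = b then 1 else 0 := by
  show (σ.precomp κ).permMatrix R a b = _
  simp [PEquiv.toMatrix_apply]

theorem trace_colourMatrix (σ : Perm α) :
    trace (colourMatrix κ R σ) = Nat.card {a : α → κ // a ∘ σ = a} := by
  show trace ((σ.precomp κ).permMatrix R) = _
  rw [trace_permutation, ← Nat.card_coe_set_eq]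
  rfl

end ColourMatrix

theorem transpositionMatrix_eq_colourMatrix (θ n : ℕ) (x y : Fin n) :
    transpositionMatrix θ n x y = colourMatrix (Fin θ) ℂ (swap x y) := by
  ext a b
  rw [colourMatrix_apply]
  rfl

theorem trace_colourMatrix_eq_pow_cycleCount (θ n : ℕ) (σ : Perm (Fin n)) :
    trace (colourMatrix (Fin θ) ℂ σ) = (θ : ℂ) ^ cycleCount n σ := by
  rw [trace_colourMatrix, Perm.nat_card_comp_eq_self, Nat.card_eq_fintype_card,
    Fintype.card_fin, Fintype.card_fin]
  push_cast
  rfl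

noncomputable def transpositionSum (θ n : ℕ) :
    Matrix (Fin n → Fin θ) (Fin n → Fin θ) ℂ :=
  ∑ τ ∈ Perm.transpositions (Fin n), colourMatrix (Fin θ) ℂ τ

theorem hamiltonian_eq (θ n : ℕ) (hn : 2 ≤ n) :
    hamiltonian θ n = (n.choose 2 : ℂ) • 1 - transpositionSum θ n := by
  have hcard : #(univ.filter fun p : Fin n × Fin n => p.1 < p.2) = n.choose 2 := by
    rw [card_eq_sum_ones, Perm.sum_swap_of_lt (fun _ => 1), ← card_eq_sum_ones,
      Perm.card_transpositions (by simpa), Fintype.card_fin]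
  rw [hamiltonian, sum_sub_distrib, sum_const, hcard, neg_sub, transpositionSum,
    ← Perm.sum_swap_of_lt, Nat.cast_smul_eq_nsmul]
  simp only [transpositionMatrix_eq_colourMatrix]

theorem smul_hamiltonian_eq (θ n : ℕ) (hn : 2 ≤ n) (β : ℝ) :
    (-(β / (n : ℝ)) : ℂ) • hamiltonian θ n
      = ((β / n : ℝ) : ℂ) • transpositionSum θ n
        + (-(β * (n - 1) / 2 : ℝ) : ℂ) • 1 := by
  have hn0 : (n : ℂ) ≠ 0 := by norm_cast; omega
  rw [hamiltonian_eq θ n hn, Nat.cast_choose_two]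
  push_cast
  match_scalars <;> field_simp

theorem Ntrans_eq_card_filter_piFinset (n k : ℕ) (σ : Perm (Fin n)) :
    Ntrans n k σ = #{g ∈ Fintype.piFinset fun _ : Fin k => Perm.transpositions (Fin n) |
      (List.ofFn g).reverse.prod = σ} := by
  rw [Ntrans]
  congr 1
  ext g
  simp [Perm.mem_transpositions]

theorem Ntrans_le (n k : ℕ) (σ : Perm (Fin n)) :
    Ntrans n k σ ≤ #(Perm.transpositions (Fin n)) ^ k := by
  rw [Ntrans_eq_card_filter_piFinset]
  exact (card_filter_le _ _).trans (by simp)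

theorem trace_transpositionSum_pow (θ n k : ℕ) :
    trace (transpositionSum θ n ^ k)
      = ∑ σ : Perm (Fin n), (Ntrans n k σ : ℂ) * (θ : ℂ) ^ cycleCount n σ := by
  rw [transpositionSum, sum_pow_eq_sum_piFinset_reverse_prod, trace_sum]
  simp_rw [← map_list_prod, trace_colourMatrix_eq_pow_cycleCount, Ntrans_eq_card_filter_piFinset]
  rw [← sum_fiberwise_of_maps_to (g := fun g => (List.ofFn g).reverse.prod)
    (fun _ _ => mem_univ _)]
  refine sum_congr rfl fun σ _ => ?_
  rw [sum_congr rfl fun g hg => by rw [(mem_filter.1 hg).2], sum_const, nsmul_eq_mul]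

section MatrixExp

variable {m 𝕜 : Type*} [Fintype m] [DecidableEq m] [RCLike 𝕜]

theorem Matrix.hasSum_trace_exp (A : Matrix m m 𝕜) :
    HasSum (fun k => (k.factorial : 𝕜)⁻¹ * trace (A ^ k)) (trace (NormedSpace.exp A)) := by
  open scoped Matrix.Norms.Operator in
  have h := (NormedSpace.exp_series_hasSum_exp' (𝕂 := 𝕜) A).mapL
    (traceLinearMap m 𝕜 𝕜).toContinuousLinearMap
  simp only [LinearMap.coe_toContinuousLinearMap', traceLinearMap_apply, trace_smul,
    smul_eq_mul] at h
  exact h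

theorem Matrix.exp_smul_one (c : 𝕜) :
    NormedSpace.exp (c • 1 : Matrix m m 𝕜) = NormedSpace.exp c • 1 := by
  open scoped Matrix.Norms.Operator in
  have h := NormedSpace.algebraMap_exp_comm (𝔸 := Matrix m m 𝕜) c
  rw [Algebra.algebraMap_eq_smul_one, Algebra.algebraMap_eq_smul_one] at h
  exact h.symm

theorem Matrix.exp_add_smul_one (A : Matrix m m 𝕜) (c : 𝕜) :
    NormedSpace.exp (A + c • 1) = NormedSpace.exp c • NormedSpace.exp A := by
  rw [Matrix.exp_add_of_commute _ _ ((Commute.one_right A).smul_right c), exp_smul_one,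
    mul_smul_one]

end MatrixExp

theorem hasSum_fdist (n : ℕ) (hn : 2 ≤ n) (β : ℝ) (σ : Perm (Fin n)) :
    HasSum (fun k => (β / n) ^ k / k.factorial * Ntrans n k σ)
      (Real.exp (β * (n - 1) / 2) * fdist β n σ) := by
  have hn' : (2 : ℝ) ≤ n := by exact_mod_cast hn
  have hC : (n.choose 2 : ℝ) = n * (n - 1) / 2 := Nat.cast_choose_two ℝ n
  have hC0 : (n.choose 2 : ℝ) ≠ 0 := by rw [hC]; nlinarith
  have hterm : ∀ k : ℕ,
      (β * (n - 1) / 2) ^ k / k.factorial * Ntrans n k σ / (n.choose 2 : ℝ) ^ k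
        = (β / n) ^ k / k.factorial * Ntrans n k σ := by
    intro k
    have : β * (n - 1) / 2 = β / n * n.choose 2 := by rw [hC]; field_simp
    rw [this, mul_pow]
    field_simp
  have hsummable : Summable fun k : ℕ => (β / n) ^ k / k.factorial * (Ntrans n k σ : ℝ) := by
    refine .of_norm_bounded (Real.summable_pow_div_factorial (|β / n| * n.choose 2)) fun k => ?_
    have hN : (Ntrans n k σ : ℝ) ≤ (n.choose 2 : ℝ) ^ k := by
      have := Ntrans_le n k σ
      rw [Perm.card_transpositions (by simpa), Fintype.card_fin] at this
      exact_mod_cast this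
    rw [norm_mul, norm_div, norm_pow, Real.norm_eq_abs, Real.norm_natCast, Real.norm_natCast,
      mul_pow, mul_div_right_comm]
    gcongr
  rw [fdist, ← mul_assoc, ← Real.exp_add, add_neg_cancel, Real.exp_zero, one_mul,
    tsum_congr hterm]
  exact hsummable.hasSum

theorem hasSum_trace_smul_transpositionSum_pow (θ n : ℕ) (hn : 2 ≤ n) (β : ℝ) :
    HasSum
      (fun k => (k.factorial : ℂ)⁻¹
        * trace ((((β / n : ℝ) : ℂ) • transpositionSum θ n) ^ k))
      (∑ σ : Perm (Fin n),
        ((Real.exp (β * (n - 1) / 2) * fdist β n σ : ℝ) : ℂ)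
          * (θ : ℂ) ^ cycleCount n σ) := by
  refine (hasSum_sum fun σ _ => (Complex.hasSum_ofReal.2 (hasSum_fdist n hn β σ)).mul_right
    ((θ : ℂ) ^ cycleCount n σ)).congr_fun fun k => ?_
  rw [smul_pow, trace_smul, trace_transpositionSum_pow, smul_eq_mul, mul_sum, mul_sum]
  refine sum_congr rfl fun σ _ => ?_
  push_cast
  ring

theorem stmt1 (θ n : ℕ) (hn : 2 ≤ n) (β : ℝ) :
    Matrix.trace (NormedSpace.exp ((-(β / (n : ℝ)) : ℂ) • hamiltonian θ n))
      = ((∑ σ : Equiv.Perm (Fin n), fdist β n σ * (θ : ℝ) ^ cycleCount n σ : ℝ) : ℂ) := by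
  rw [smul_hamiltonian_eq θ n hn, exp_add_smul_one, trace_smul,
    (hasSum_trace_exp _).unique (hasSum_trace_smul_transpositionSum_pow θ n hn β),
    ← Complex.exp_eq_exp_ℂ]
  push_cast
  rw [smul_eq_mul, mul_sum]
  refine sum_congr rfl fun σ _ => ?_
  rw [← mul_assoc, ← mul_assoc, ← Complex.exp_add, neg_add_cancel, Complex.exp_zero, one_mul]
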